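/- arXiv:0902.3298 — 9 statements merged into one kernel-verified Lean document; each statement's English description precedes it below -/
import Mathlib

section
/- Let a ≤ -1 be a real number and define f_a(x) = ((a + √(1 + x²))·arctan x)/x for x > 0. Then f_a is strictly increasing on (0, ∞). -/
/-!
Write `f_a(x) = a · (arctan x / x) + √(1 + x²) · arctan x / x`. The first summand is monotone
because `a ≤ 0` and `arctan x / x` decreases (its derivative has the sign of
`x / (1 + x²) - arctan x < 0`). The second is strictly increasing: its derivative is
`(x - arctan x) / (x² √(1 + x²)) > 0`.
-/

open Real Set

lemma strictMonoOn_of_hasDerivAt_pos_of_isOpen {D : Set ℝ} (hD : Convex ℝ D) (hDo : IsOpen D)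
    {f f' : ℝ → ℝ} (hf : ∀ x ∈ D, HasDerivAt f (f' x) x) (hf' : ∀ x ∈ D, 0 < f' x) :
    StrictMonoOn f D :=
  strictMonoOn_of_hasDerivWithinAt_pos hD (fun x hx ↦ (hf x hx).continuousAt.continuousWithinAt)
    (by rw [hDo.interior_eq]; exact fun x hx ↦ (hf x hx).hasDerivWithinAt)
    (by rwa [hDo.interior_eq])

lemma strictAntiOn_of_hasDerivAt_neg_of_isOpen {D : Set ℝ} (hD : Convex ℝ D) (hDo : IsOpen D)
    {f f' : ℝ → ℝ} (hf : ∀ x ∈ D, HasDerivAt f (f' x) x) (hf' : ∀ x ∈ D, f' x < 0) :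
    StrictAntiOn f D :=
  strictAntiOn_of_hasDerivWithinAt_neg hD (fun x hx ↦ (hf x hx).continuousAt.continuousWithinAt)
    (by rw [hDo.interior_eq]; exact fun x hx ↦ (hf x hx).hasDerivWithinAt)
    (by rwa [hDo.interior_eq])

namespace Real

lemma arctan_lt_self {x : ℝ} (hx : 0 < x) : arctan x < x := by
  simpa only [tan_arctan] using lt_tan (arctan_pos.mpr hx) (arctan_lt_pi_div_two x)

lemma div_one_add_sq_lt_arctan {x : ℝ} (hx : 0 < x) : x / (1 + x ^ 2) < arctan x := by
  set θ := arctan x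
  have hθ : 0 < θ := arctan_pos.mpr hx
  have hsc : sin θ * cos θ = x / (1 + x ^ 2) := by
    rw [sin_arctan, cos_arctan, div_mul_div_comm, mul_one, mul_self_sqrt (by positivity)]
  have hsin : 0 < sin θ :=
    sin_pos_of_pos_of_lt_pi hθ ((arctan_lt_pi_div_two x).trans (by linarith [pi_pos]))
  calc x / (1 + x ^ 2) = sin θ * cos θ := hsc.symm
    _ ≤ sin θ := mul_le_of_le_one_right hsin.le (cos_le_one θ)
    _ < θ := sin_lt hθ

lemma hasDerivAt_sqrt_one_add_sq (x : ℝ) :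
    HasDerivAt (fun x : ℝ ↦ √(1 + x ^ 2)) (x / √(1 + x ^ 2)) x := by
  have hu : HasDerivAt (fun x : ℝ ↦ 1 + x ^ 2) (2 * x) x := by
    simpa using (hasDerivAt_pow 2 x).const_add 1
  refine (hu.sqrt (by positivity)).congr_deriv ?_
  field_simp

lemma strictAntiOn_arctan_div_self : StrictAntiOn (fun x ↦ arctan x / x) (Ioi 0) := by
  refine strictAntiOn_of_hasDerivAt_neg_of_isOpen (convex_Ioi 0) isOpen_Ioi
    (fun x hx ↦ (hasDerivAt_arctan x).div (hasDerivAt_id x) (ne_of_gt hx))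
    fun x (hx : 0 < x) ↦ ?_
  apply div_neg_of_neg_of_pos _ (by positivity)
  simpa only [mul_one, one_div, inv_mul_eq_div] using sub_neg.mpr (div_one_add_sq_lt_arctan hx)

lemma strictMonoOn_sqrt_one_add_sq_mul_arctan_div_self :
    StrictMonoOn (fun x ↦ √(1 + x ^ 2) * arctan x / x) (Ioi 0) := by
  refine strictMonoOn_of_hasDerivAt_pos_of_isOpen (convex_Ioi 0) isOpen_Ioi
    (fun x hx ↦ ((hasDerivAt_sqrt_one_add_sq x).mul (hasDerivAt_arctan x)).div (hasDerivAt_id x)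
      (ne_of_gt hx)) fun x (hx : 0 < x) ↦ ?_
  set s := √(1 + x ^ 2)
  have hs : 0 < s := by positivity
  have hs2 : s ^ 2 = 1 + x ^ 2 := sq_sqrt (by positivity)
  have hnum : (x / s * arctan x + s * (1 / (1 + x ^ 2))) * x - s * arctan x * 1
      = (x - arctan x) / s := by
    rw [← hs2]
    field_simp
    linear_combination -arctan x * hs2
  apply div_pos _ (by positivity)
  simp only [Pi.mul_apply]
  rw [hnum]
  exact div_pos (sub_pos.mpr (arctan_lt_self hx)) hs

end Real

theorem shafer_f_strictMono_of_le_neg_one (a : ℝ) (ha : a ≤ -1) :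
    StrictMonoOn (fun x : ℝ => ((a + Real.sqrt (1 + x ^ 2)) * Real.arctan x) / x)
      (Set.Ioi (0 : ℝ)) := by
  have hmono : MonotoneOn (fun x ↦ a * (arctan x / x)) (Ioi 0) := fun x hx y hy hxy ↦
    mul_le_mul_of_nonpos_left (strictAntiOn_arctan_div_self.antitoneOn hx hy hxy) (by linarith)
  convert strictMonoOn_sqrt_one_add_sq_mul_arctan_div_self.add_monotone hmono using 2 with x
  ring
end

section
/- Let a be a real number with 0 ≤ a ≤ 1/2 and define f_a(x) = ((a + √(1 + x²))·arctan x)/x for x > 0. Then f_a is strictly increasing on (0, ∞). -/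
/-!
Writing `s = √(1 + x²)`, the derivative of `f_a` has the sign of `x (a + s) - s (a s + 1) arctan x`.
Since `(a + s) / (a s + 1)` decreases in `a` when `s > 1`, it suffices to treat `a = 1/2`, i.e. to show
`arctan x < x (1 + 2s) / (s (s + 2))`. Under `x = tan θ` this is the trigonometric inequality
`θ (1 + 2 cos θ) < sin θ (2 + cos θ)` on `(0, π/2)`, whose two sides agree at `0` and whose
difference has derivative `2 sin θ (θ - sin θ) > 0`.
-/

open Real Set

lemma mul_one_add_two_mul_cos_lt_sin_mul_two_add_cos {θ : ℝ} (h0 : 0 < θ) (hπ : θ ≤ π) :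
    θ * (1 + 2 * cos θ) < sin θ * (2 + cos θ) := by
  set g : ℝ → ℝ := fun y => sin y * (2 + cos y) - y * (1 + 2 * cos y)
  have hg : ∀ y, HasDerivAt g (2 * sin y * (y - sin y)) y := fun y => by
    refine (((hasDerivAt_sin y).fun_mul ((hasDerivAt_cos y).const_add 2)).fun_sub
      ((hasDerivAt_id' y).fun_mul (((hasDerivAt_cos y).const_mul 2).const_add 1))).congr_deriv ?_
    linear_combination sin_sq_add_cos_sq y
  have hmono : StrictMonoOn g (Icc 0 π) := by
    refine strictMonoOn_of_deriv_pos (convex_Icc 0 π)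
      (fun y _ => (hg y).continuousAt.continuousWithinAt) fun y hy => ?_
    rw [interior_Icc] at hy
    rw [(hg y).deriv]
    exact mul_pos (mul_pos two_pos (sin_pos_of_pos_of_lt_pi hy.1 hy.2))
      (sub_pos.2 (sin_lt hy.1))
  have := hmono ⟨le_rfl, pi_pos.le⟩ ⟨h0.le, hπ⟩ h0
  simp only [g, sin_zero, cos_zero, zero_mul, sub_zero] at this
  linarith

lemma arctan_mul_lt {x : ℝ} (hx : 0 < x) :
    arctan x * (√(1 + x ^ 2) * (√(1 + x ^ 2) + 2)) < x * (1 + 2 * √(1 + x ^ 2)) := by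
  set s := √(1 + x ^ 2)
  have hs : 0 < s := sqrt_pos.2 (by positivity)
  have htrig := mul_one_add_two_mul_cos_lt_sin_mul_two_add_cos (arctan_pos.2 hx)
    ((arctan_lt_pi_div_two x).le.trans (by linarith [pi_pos]))
  rw [cos_arctan, sin_arctan] at htrig
  calc arctan x * (s * (s + 2)) = arctan x * (1 + 2 * (1 / s)) * s ^ 2 := by field_simp
    _ < x / s * (2 + 1 / s) * s ^ 2 := mul_lt_mul_of_pos_right htrig (by positivity)
    _ = x * (1 + 2 * s) := by field_simp; ring

lemma arctan_mul_lt_of_le_half {a x : ℝ} (ha0 : 0 ≤ a) (ha1 : a ≤ 1 / 2) (hx : 0 < x) :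
    arctan x * (√(1 + x ^ 2) * (a * √(1 + x ^ 2) + 1)) < x * (a + √(1 + x ^ 2)) := by
  set s := √(1 + x ^ 2)
  have hs : 0 < s := sqrt_pos.2 (by positivity)
  have hs2 : s ^ 2 = 1 + x ^ 2 := sq_sqrt (by positivity)
  -- the two sides differ by `(1 - 2a) x²`
  have hcross : (1 + 2 * s) * (a * s + 1) ≤ (a + s) * (s + 2) := by
    nlinarith [mul_nonneg (sub_nonneg.2 ha1) (sq_nonneg x)]
  have hhalf := mul_lt_mul_of_pos_right (arctan_mul_lt hx) (by positivity : 0 < a * s + 1)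
  have : arctan x * (s * (a * s + 1)) * (s + 2) < x * (a + s) * (s + 2) := by
    nlinarith [mul_le_mul_of_nonneg_left hcross hx.le]
  exact lt_of_mul_lt_mul_right this (by positivity)

lemma hasDerivAt_add_sqrt_mul_arctan_div (a : ℝ) {x : ℝ} (hx : x ≠ 0) :
    HasDerivAt (fun y : ℝ => ((a + √(1 + y ^ 2)) * arctan y) / y)
      ((x * (a + √(1 + x ^ 2)) - arctan x * (√(1 + x ^ 2) * (a * √(1 + x ^ 2) + 1)))
        / (x ^ 2 * (1 + x ^ 2))) x := by
  set s := √(1 + x ^ 2)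
  have hs : 0 < s := sqrt_pos.2 (by positivity)
  have hs2 : s ^ 2 = 1 + x ^ 2 := sq_sqrt (by positivity)
  have hsqrt : HasDerivAt (fun y : ℝ => √(1 + y ^ 2)) (x / s) x := by
    refine ((((hasDerivAt_pow 2 x).const_add 1).sqrt (by positivity)).congr_deriv ?_)
    field_simp
    ring
  refine ((hsqrt.const_add a).fun_mul (hasDerivAt_arctan x)).fun_div (hasDerivAt_id' x) hx
    |>.congr_deriv ?_
  field_simp
  linear_combination (arctan x * (a * s - x ^ 2)) * hs2

theorem shafer_f_strictMono_of_mem_Icc (a : ℝ) (ha0 : 0 ≤ a) (ha1 : a ≤ 1 / 2) :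
    StrictMonoOn (fun x : ℝ => ((a + Real.sqrt (1 + x ^ 2)) * Real.arctan x) / x)
      (Set.Ioi (0 : ℝ)) := by
  refine strictMonoOn_of_deriv_pos (convex_Ioi 0)
    (fun x hx => (hasDerivAt_add_sqrt_mul_arctan_div a (ne_of_gt hx)).continuousAt.continuousWithinAt)
    fun x hx => ?_
  rw [interior_Ioi, mem_Ioi] at hx
  rw [(hasDerivAt_add_sqrt_mul_arctan_div a (ne_of_gt hx)).deriv]
  exact div_pos (sub_pos.2 (arctan_mul_lt_of_le_half ha0 ha1 hx)) (by positivity)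
end

section
/- Let a be a real number with 1/2 < a < 2/π and define f_a(x) = ((a + √(1 + x²))·arctan x)/x for x > 0. Then f_a has a unique minimum point on (0, ∞): there exists a unique x₀ ∈ (0, ∞) such that f_a(x₀) < f_a(x) for all x ∈ (0, ∞) with x ≠ x₀. -/
/-!
Substituting `x = tan θ` turns `f_a` into `G θ = θ (a cos θ + 1) / sin θ` on `(0, π/2)`, with
`G' = N / sin² θ` for `N θ = sin θ + a sin θ cos θ - a θ - θ cos θ`, and `N' = sin θ · (θ - 2a sin θ)`.
Each of `θ ↦ θ - 2a sin θ` and `N` vanishes at `0`, is positive at `π/2` (because `a < 2/π`) and has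
a derivative that changes sign once, from negative to positive (for `θ - 2a sin θ` because
`a > 1/2`); hence it changes sign once itself, from negative to positive. Going up this chain,
`G'` changes sign once on `(0, π/2)`, so `G`, and with it `f_a`, has a unique strict minimum.
-/

open Real Set

def NegThenPos (f : ℝ → ℝ) (a z c : ℝ) : Prop :=
  (∀ x ∈ Ioo a z, f x < 0) ∧ ∀ x ∈ Ioo z c, 0 < f x

namespace NegThenPos

variable {f f' u : ℝ → ℝ} {a z c : ℝ}

theorem mono (h : NegThenPos f a z c) {a' c' : ℝ} (ha : a ≤ a') (hc : c' ≤ c) :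
    NegThenPos f a' z c' :=
  ⟨fun x hx => h.1 x (Ioo_subset_Ioo_left ha hx), fun x hx => h.2 x (Ioo_subset_Ioo_right hc hx)⟩

theorem pos_mul (h : NegThenPos f a z c) (hu : ∀ x ∈ Ioo a c, 0 < u x) (hz : z ∈ Icc a c) :
    NegThenPos (fun x => u x * f x) a z c :=
  ⟨fun x hx => mul_neg_of_pos_of_neg (hu x (Ioo_subset_Ioo_right hz.2 hx)) (h.1 x hx),
    fun x hx => mul_pos (hu x (Ioo_subset_Ioo_left hz.1 hx)) (h.2 x hx)⟩

theorem div_pos (h : NegThenPos f a z c) (hu : ∀ x ∈ Ioo a c, 0 < u x) (hz : z ∈ Icc a c) :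
    NegThenPos (fun x => f x / u x) a z c :=
  ⟨fun x hx => div_neg_of_neg_of_pos (h.1 x hx) (hu x (Ioo_subset_Ioo_right hz.2 hx)),
    fun x hx => _root_.div_pos (h.2 x hx) (hu x (Ioo_subset_Ioo_left hz.1 hx))⟩

theorem strictAntiOn (h : NegThenPos f' a z c) (hf : ContinuousOn f (Icc a z))
    (hd : ∀ x ∈ Ioo a z, HasDerivAt f (f' x) x) : StrictAntiOn f (Icc a z) :=
  strictAntiOn_of_hasDerivWithinAt_neg (convex_Icc a z) hf
    (fun x hx => (hd x (by rwa [interior_Icc] at hx)).hasDerivWithinAt)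
    (fun x hx => h.1 x (by rwa [interior_Icc] at hx))

theorem strictMonoOn (h : NegThenPos f' a z c) (hf : ContinuousOn f (Icc z c))
    (hd : ∀ x ∈ Ioo z c, HasDerivAt f (f' x) x) : StrictMonoOn f (Icc z c) :=
  strictMonoOn_of_hasDerivWithinAt_pos (convex_Icc z c) hf
    (fun x hx => (hd x (by rwa [interior_Icc] at hx)).hasDerivWithinAt)
    (fun x hx => h.2 x (by rwa [interior_Icc] at hx))

theorem lt_of_hasDerivAt (h : NegThenPos f' a z c) (hz : z ∈ Ioo a c)
    (hd : ∀ x ∈ Ioo a c, HasDerivAt f (f' x) x) {x : ℝ} (hx : x ∈ Ioo a c) (hxz : x ≠ z) :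
    f z < f x := by
  have hcont : ∀ {s}, s ⊆ Ioo a c → ContinuousOn f s := fun hs y hy =>
    (hd y (hs hy)).continuousAt.continuousWithinAt
  rcases hxz.lt_or_gt with hxz | hzx
  · have hsub : Icc x z ⊆ Ioo a c := Icc_subset_Ioo hx.1 hz.2
    exact (h.mono hx.1.le le_rfl).strictAntiOn (hcont hsub)
      (fun y hy => hd y (hsub (Ioo_subset_Icc_self hy))) (left_mem_Icc.2 hxz.le)
      (right_mem_Icc.2 hxz.le) hxz
  · have hsub : Icc z x ⊆ Ioo a c := Icc_subset_Ioo hz.1 hx.2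
    exact (h.mono le_rfl hx.2.le).strictMonoOn (hcont hsub)
      (fun y hy => hd y (hsub (Ioo_subset_Icc_self hy))) (left_mem_Icc.2 hzx.le)
      (right_mem_Icc.2 hzx.le) hzx

theorem exists_of_hasDerivAt (h : NegThenPos f' a z c) (hz : z ∈ Ioo a c)
    (hd : ∀ x ∈ Icc a c, HasDerivAt f (f' x) x) (ha : f a = 0) (hc : 0 < f c) :
    ∃ w ∈ Ioo a c, NegThenPos f a w c := by
  have hcont : ContinuousOn f (Icc a c) := fun x hx => (hd x hx).continuousAt.continuousWithinAt
  have hanti : StrictAntiOn f (Icc a z) :=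
    h.strictAntiOn (hcont.mono (Icc_subset_Icc_right hz.2.le))
      (fun x hx => hd x ⟨hx.1.le, hx.2.le.trans hz.2.le⟩)
  have hmono : StrictMonoOn f (Icc z c) :=
    h.strictMonoOn (hcont.mono (Icc_subset_Icc_left hz.1.le))
      (fun x hx => hd x ⟨hz.1.le.trans hx.1.le, hx.2.le⟩)
  have hfz : f z < 0 := ha ▸ hanti (left_mem_Icc.2 hz.1.le) (right_mem_Icc.2 hz.1.le) hz.1
  obtain ⟨w, hw, hfw⟩ :=
    intermediate_value_Ioo hz.2.le (hcont.mono (Icc_subset_Icc_left hz.1.le)) ⟨hfz, hc⟩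
  have hwc : w ∈ Icc z c := ⟨hw.1.le, hw.2.le⟩
  refine ⟨w, ⟨hz.1.trans hw.1, hw.2⟩, fun x hx => ?_, fun x hx => ?_⟩
  · rcases le_or_gt x z with hxz | hzx
    · exact ha ▸ hanti (left_mem_Icc.2 hz.1.le) ⟨hx.1.le, hxz⟩ hx.1
    · exact hfw ▸ hmono ⟨hzx.le, hx.2.le.trans hw.2.le⟩ hwc hx.2
  · exact hfw ▸ hmono hwc ⟨hw.1.le.trans hx.1.le, hx.2.le⟩ hx.1

end NegThenPos

section Shafer

variable {a : ℝ}

theorem negThenPos_one_sub_two_mul_cos (ha : 1 / 2 < a) :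
    NegThenPos (fun θ => 1 - 2 * a * cos θ) 0 (arccos (1 / (2 * a))) (π / 2) := by
  have hc0 : 0 < 1 / (2 * a) := by positivity
  have hc1 : 1 / (2 * a) < 1 := by rw [div_lt_one (by linarith)]; linarith
  have hcos : cos (arccos (1 / (2 * a))) = 1 / (2 * a) := cos_arccos (by linarith) hc1.le
  have hθ₁ : arccos (1 / (2 * a)) < π / 2 := arccos_lt_pi_div_two.2 hc0
  have h2a : 2 * a * (1 / (2 * a)) = 1 := by field_simp
  constructor
  · intro θ hθ
    have := cos_lt_cos_of_nonneg_of_le_pi_div_two hθ.1.le hθ₁.le hθ.2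
    nlinarith
  · intro θ hθ
    have := cos_lt_cos_of_nonneg_of_le_pi_div_two (arccos_nonneg _) hθ.2.le hθ.1
    nlinarith

theorem hasDerivAt_sub_two_mul_sin (θ : ℝ) :
    HasDerivAt (fun θ => θ - 2 * a * sin θ) (1 - 2 * a * cos θ) θ :=
  (hasDerivAt_id θ).sub ((hasDerivAt_sin θ).const_mul (2 * a))

noncomputable def shaferGDerivNum (a θ : ℝ) : ℝ :=
  sin θ + a * sin θ * cos θ - a * θ - θ * cos θ

noncomputable def shaferG (a θ : ℝ) : ℝ := θ * (a * cos θ + 1) / sin θ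

theorem hasDerivAt_shaferGDerivNum (θ : ℝ) :
    HasDerivAt (shaferGDerivNum a) (sin θ * (θ - 2 * a * sin θ)) θ := by
  have hs := hasDerivAt_sin θ
  have hc := hasDerivAt_cos θ
  refine (((hs.add ((hs.const_mul a).mul hc)).sub ((hasDerivAt_id θ).const_mul a)).sub
    ((hasDerivAt_id θ).mul hc)).congr_deriv ?_
  simp only [id_eq]
  linear_combination a * sin_sq_add_cos_sq θ

theorem hasDerivAt_shaferG {θ : ℝ} (hs : sin θ ≠ 0) :
    HasDerivAt (shaferG a) (shaferGDerivNum a θ / sin θ ^ 2) θ := by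
  refine (((hasDerivAt_id θ).mul (((hasDerivAt_cos θ).const_mul a).add_const 1)).div
    (hasDerivAt_sin θ) hs).congr_deriv ?_
  congr 1
  simp only [shaferGDerivNum, Pi.mul_apply, id_eq]
  linear_combination (-a * θ) * sin_sq_add_cos_sq θ

theorem shaferG_arctan {x : ℝ} (hx : 0 < x) :
    shaferG a (arctan x) = (a + √(1 + x ^ 2)) * arctan x / x := by
  have hu : 0 < √(1 + x ^ 2) := sqrt_pos.2 (by positivity)
  rw [shaferG, cos_arctan, sin_arctan]
  field_simp

theorem exists_isStrictMin_shaferG (ha1 : 1 / 2 < a) (ha2 : a < 2 / π) :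
    ∃ θ₀ ∈ Ioo 0 (π / 2), ∀ θ ∈ Ioo 0 (π / 2), θ ≠ θ₀ → shaferG a θ₀ < shaferG a θ := by
  have haπ : a * π < 2 := (lt_div_iff₀ pi_pos).mp ha2
  have hsin : ∀ θ ∈ Ioo 0 (π / 2), 0 < sin θ := fun θ hθ =>
    sin_pos_of_pos_of_lt_pi hθ.1 (by linarith [hθ.2, pi_pos])
  have hθ₁ : arccos (1 / (2 * a)) ∈ Ioo 0 (π / 2) :=
    ⟨arccos_pos.2 (by rw [div_lt_one (by linarith)]; linarith),
      arccos_lt_pi_div_two.2 (one_div_pos.2 (by linarith))⟩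
  obtain ⟨θ₂, hθ₂, hp⟩ := (negThenPos_one_sub_two_mul_cos ha1).exists_of_hasDerivAt hθ₁
    (fun θ _ => hasDerivAt_sub_two_mul_sin θ) (by simp)
    (by rw [sin_pi_div_two]; nlinarith [pi_gt_three])
  obtain ⟨θ₀, hθ₀, hN⟩ := (hp.pos_mul hsin (Ioo_subset_Icc_self hθ₂)).exists_of_hasDerivAt hθ₂
    (fun θ _ => hasDerivAt_shaferGDerivNum θ) (by simp [shaferGDerivNum])
    (by rw [shaferGDerivNum, sin_pi_div_two, cos_pi_div_two]; nlinarith)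
  exact ⟨θ₀, hθ₀, fun θ hθ hne =>
    (hN.div_pos (fun θ hθ => pow_pos (hsin θ hθ) 2) (Ioo_subset_Icc_self hθ₀)).lt_of_hasDerivAt
      hθ₀ (fun θ hθ => hasDerivAt_shaferG (hsin θ hθ).ne') hθ hne⟩

end Shafer

theorem shafer_f_unique_min (a : ℝ) (ha1 : 1 / 2 < a) (ha2 : a < 2 / Real.pi) :
    ∃! x₀ : ℝ, x₀ ∈ Set.Ioi (0 : ℝ) ∧
      ∀ x ∈ Set.Ioi (0 : ℝ), x ≠ x₀ →
        ((a + Real.sqrt (1 + x₀ ^ 2)) * Real.arctan x₀) / x₀ <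
          ((a + Real.sqrt (1 + x ^ 2)) * Real.arctan x) / x := by
  obtain ⟨θ₀, hθ₀, hmin⟩ := exists_isStrictMin_shaferG ha1 ha2
  have hx₀ : 0 < tan θ₀ := tan_pos_of_pos_of_lt_pi_div_two hθ₀.1 hθ₀.2
  have harctan : arctan (tan θ₀) = θ₀ := arctan_tan (by linarith [hθ₀.1, pi_pos]) hθ₀.2
  have hstrict : ∀ x ∈ Ioi (0 : ℝ), x ≠ tan θ₀ →
      (a + √(1 + tan θ₀ ^ 2)) * arctan (tan θ₀) / tan θ₀ < (a + √(1 + x ^ 2)) * arctan x / x := by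
    intro x hx hne
    rw [← shaferG_arctan hx, ← shaferG_arctan hx₀, harctan]
    exact hmin _ ⟨arctan_pos.2 hx, arctan_lt_pi_div_two x⟩
      (fun h => hne (by rw [← harctan] at h; exact arctan_injective h))
  exact ⟨tan θ₀, ⟨hx₀, hstrict⟩, fun y ⟨hy, hymin⟩ => by_contra fun hne =>
    (hymin _ hx₀ (Ne.symm hne)).asymm (hstrict y hy hne)⟩
end

section
/- For every real number a with 0 ≤ a ≤ 1/2 and every x > 0, one has arctan x < (π/2)·x/(a + √(1 + x²)). -/
/-!
With `θ = arctan x` we have `cos θ = 1 / √(1 + x²)` and `sin θ = x / √(1 + x²)`, so, since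
`a ≤ 1/2`, the inequality reduces to `θ (cos θ + 2) < π sin θ` on `(0, π/2)`. The function
`π sin t - t (cos t + 2)` vanishes at `0` and `π/2`, and its second derivative
`(2 - π) sin t + t cos t` is negative there because `t cos t < sin t` and `π > 3`;
a strictly concave function is positive strictly between two zeros.
-/

open Real Set

lemma mul_cos_lt_sin {t : ℝ} (h0 : 0 < t) (h1 : t < π / 2) : t * cos t < sin t := by
  have hcos : 0 < cos t := cos_pos_of_mem_Ioo ⟨by linarith [pi_pos], h1⟩
  have htan := lt_tan h0 h1
  rwa [tan_eq_sin_div_cos, lt_div_iff₀ hcos] at htan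

lemma strictConcaveOn_pi_mul_sin_sub_mul_cos_add_two :
    StrictConcaveOn ℝ (Icc 0 (π / 2)) fun t ↦ π * sin t - t * (cos t + 2) := by
  have hderiv : deriv (fun t ↦ π * sin t - t * (cos t + 2)) =
      fun t ↦ (π - 1) * cos t + t * sin t - 2 := by
    funext t
    refine (((hasDerivAt_sin t).const_mul π).sub
      ((hasDerivAt_id t).mul ((hasDerivAt_cos t).add_const 2))).deriv.trans ?_
    simp only [id_eq]
    ring
  have hderiv2 (t : ℝ) : deriv (fun t ↦ (π - 1) * cos t + t * sin t - 2) t =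
      (2 - π) * sin t + t * cos t := by
    refine ((((hasDerivAt_cos t).const_mul (π - 1)).add
      ((hasDerivAt_id t).mul (hasDerivAt_sin t))).sub_const 2).deriv.trans ?_
    simp only [id_eq]
    ring
  refine strictConcaveOn_of_deriv2_neg (convex_Icc _ _) (by fun_prop) fun t ht ↦ ?_
  rw [interior_Icc] at ht
  rw [Function.iterate_succ_apply, Function.iterate_one, hderiv, hderiv2]
  have hsin : 0 < sin t := sin_pos_of_pos_of_lt_pi ht.1 (by linarith [ht.2, pi_pos])
  nlinarith [mul_cos_lt_sin ht.1 ht.2, pi_gt_three]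

lemma mul_cos_add_two_lt_pi_mul_sin {θ : ℝ} (h0 : 0 < θ) (h1 : θ < π / 2) :
    θ * (cos θ + 2) < π * sin θ := by
  have hpi : (0 : ℝ) < π / 2 := by positivity
  have := strictConcaveOn_pi_mul_sin_sub_mul_cos_add_two.lt_on_openSegment
    (left_mem_Icc.2 hpi.le) (right_mem_Icc.2 hpi.le) hpi.ne
    (by rw [openSegment_eq_Ioo hpi]; exact ⟨h0, h1⟩)
  norm_num at this
  linarith

theorem arctan_lt_of_mem_Icc (a : ℝ) (ha0 : 0 ≤ a) (ha1 : a ≤ 1 / 2) (x : ℝ) (hx : 0 < x) :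
    Real.arctan x < (Real.pi / 2) * x / (a + Real.sqrt (1 + x ^ 2)) := by
  have hθ : 0 < arctan x := arctan_pos.2 hx
  have hs : 1 ≤ √(1 + x ^ 2) := one_le_sqrt.2 (by nlinarith)
  have key := mul_cos_add_two_lt_pi_mul_sin hθ (arctan_lt_pi_div_two x)
  rw [cos_arctan, sin_arctan] at key
  have key' : arctan x * (1 + 2 * √(1 + x ^ 2)) < π * x := by
    field_simp at key
    linarith
  rw [lt_div_iff₀ (by linarith)]
  nlinarith
end

section
/- For every real number a with a ≥ 2/π and every x > 0, one has (π/2)·x/(a + √(1 + x²)) < arctan x < (1 + a)·x/(a + √(1 + x²)). -/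
/-!
Substitute `x = tan θ` with `θ ∈ (0, π/2)`: then `√(1 + x²) = 1 / cos θ` and both bounds
become comparisons of `θ` with `k sin θ / (1 + b cos θ)`, whose derivative is
`k (b + cos θ) / (1 + b cos θ)²`. For the upper bound (`k = 1 + a`, `b = a`) the difference is
increasing as soon as `a² + a > 1`, and it vanishes at `θ = 0`. For the lower bound
(`k = π/2`, `b = 2/π`) the difference vanishes at both ends `θ = 0` and `θ = π/2`, and its
derivative has the sign of `cos θ - (π³/8 - π)`, so it increases and then decreases.
-/

open Real Set

lemma strictMonoOn_Icc_of_hasDerivAt_pos {f f' : ℝ → ℝ} {a b : ℝ}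
    (hf : ∀ x ∈ Icc a b, HasDerivAt f (f' x) x) (hf' : ∀ x ∈ Ioo a b, 0 < f' x) :
    StrictMonoOn f (Icc a b) := by
  refine strictMonoOn_of_hasDerivWithinAt_pos (f' := f') (convex_Icc a b)
    (fun x hx ↦ (hf x hx).continuousAt.continuousWithinAt) (fun x hx ↦ ?_) ?_
  · rw [interior_Icc] at hx
    exact (hf x (Ioo_subset_Icc_self hx)).hasDerivWithinAt
  · simpa only [interior_Icc] using hf'

lemma strictAntiOn_Icc_of_hasDerivAt_neg {f f' : ℝ → ℝ} {a b : ℝ}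
    (hf : ∀ x ∈ Icc a b, HasDerivAt f (f' x) x) (hf' : ∀ x ∈ Ioo a b, f' x < 0) :
    StrictAntiOn f (Icc a b) := by
  refine strictAntiOn_of_hasDerivWithinAt_neg (f' := f') (convex_Icc a b)
    (fun x hx ↦ (hf x hx).continuousAt.continuousWithinAt) (fun x hx ↦ ?_) ?_
  · rw [interior_Icc] at hx
    exact (hf x (Ioo_subset_Icc_self hx)).hasDerivWithinAt
  · simpa only [interior_Icc] using hf'

lemma pos_of_strictMonoOn_of_strictAntiOn {f : ℝ → ℝ} {a m b x : ℝ}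
    (hmono : StrictMonoOn f (Icc a m)) (hanti : StrictAntiOn f (Icc m b))
    (ha : 0 ≤ f a) (hb : 0 ≤ f b) (hx : x ∈ Ioo a b) : 0 < f x := by
  rcases le_total x m with hxm | hmx
  · exact ha.trans_lt <| hmono (left_mem_Icc.2 (hx.1.le.trans hxm)) ⟨hx.1.le, hxm⟩ hx.1
  · exact hb.trans_lt <| hanti ⟨hmx, hx.2.le⟩ (right_mem_Icc.2 (hmx.trans hx.2.le)) hx.2

lemma one_add_mul_cos_pos {b θ : ℝ} (hb : 0 ≤ b) (hθ : θ ∈ Icc 0 (π / 2)) :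
    0 < 1 + b * cos θ := by
  have := cos_nonneg_of_mem_Icc ⟨by linarith [pi_pos, hθ.1], hθ.2⟩
  positivity

lemma hasDerivAt_sin_div_one_add_mul_cos {b θ : ℝ} (h : 1 + b * cos θ ≠ 0) :
    HasDerivAt (fun t ↦ sin t / (1 + b * cos t)) ((b + cos θ) / (1 + b * cos θ) ^ 2) θ := by
  refine ((hasDerivAt_sin θ).div (((hasDerivAt_cos θ).const_mul b).const_add 1) h).congr_deriv ?_
  congr 1
  linear_combination b * sin_sq_add_cos_sq θ

lemma sin_arctan_div_one_add_mul_cos_arctan (b x : ℝ) :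
    sin (arctan x) / (1 + b * cos (arctan x)) = x / (b + √(1 + x ^ 2)) := by
  have hs : 0 < √(1 + x ^ 2) := by positivity
  rw [sin_arctan, cos_arctan]
  field_simp
  ring

lemma self_lt_one_add_mul_sin_div {a θ : ℝ} (ha : 0 ≤ a) (ha' : 1 < a ^ 2 + a)
    (hθ : θ ∈ Ioc 0 (π / 2)) : θ < (1 + a) * (sin θ / (1 + a * cos θ)) := by
  have hmono :
      StrictMonoOn (fun t ↦ (1 + a) * (sin t / (1 + a * cos t)) - t) (Icc 0 (π / 2)) := by
    refine strictMonoOn_Icc_of_hasDerivAt_pos (fun t ht ↦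
      ((hasDerivAt_sin_div_one_add_mul_cos (one_add_mul_cos_pos ha ht).ne').const_mul
        (1 + a)).sub (hasDerivAt_id t)) fun t ht ↦ ?_
    have hcos : 0 < cos t := cos_pos_of_mem_Ioo ⟨by linarith [pi_pos, ht.1], ht.2⟩
    have hcos' : cos t < 1 := by
      rw [← cos_zero]
      exact cos_lt_cos_of_nonneg_of_le_pi_div_two le_rfl ht.2.le ht.1
    have hden := one_add_mul_cos_pos ha (Ioo_subset_Icc_self ht)
    have hnum : 0 < (1 - cos t) * (a ^ 2 * cos t + (a ^ 2 + a - 1)) := by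
      apply mul_pos <;> nlinarith
    rw [sub_pos, mul_div_assoc', lt_div_iff₀ (by positivity)]
    linear_combination hnum
  simpa using hmono (left_mem_Icc.2 (by linarith [pi_pos])) (Ioc_subset_Icc_self hθ) hθ.1

lemma one_sub_pi_div_two_mul_div_sq_eq {t : ℝ} (ht : 1 + 2 / π * t ≠ 0) :
    1 - π / 2 * ((2 / π + t) / (1 + 2 / π * t) ^ 2)
      = 4 / π ^ 2 * t * (t - (π ^ 3 / 8 - π)) / (1 + 2 / π * t) ^ 2 := by
  have hπ := pi_pos.ne'
  have ht' : π + 2 * t ≠ 0 := fun h ↦ ht (by field_simp; linarith)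
  field_simp
  ring

lemma zero_lt_pi_cube_div_eight_sub_pi : 0 < π ^ 3 / 8 - π := by
  have h3 := pi_gt_three
  nlinarith [mul_pos pi_pos (show 0 < π ^ 2 - 8 by nlinarith)]

lemma pi_cube_div_eight_sub_pi_lt_one : π ^ 3 / 8 - π < 1 := by
  have h3 := pi_gt_three
  have h4 := pi_lt_d2
  nlinarith [mul_lt_mul'' h4 (show π ^ 2 - 8 < 3.15 ^ 2 - 8 by nlinarith) pi_pos.le (by nlinarith)]

lemma pi_div_two_mul_sin_div_lt_self {θ : ℝ} (hθ : θ ∈ Ioo 0 (π / 2)) :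
    π / 2 * (sin θ / (1 + 2 / π * cos θ)) < θ := by
  have ht₀ := zero_lt_pi_cube_div_eight_sub_pi
  have ht₁ := pi_cube_div_eight_sub_pi_lt_one
  set t₀ := π ^ 3 / 8 - π
  set θ₀ := arccos t₀
  have hθ₀ : θ₀ ∈ Ioo 0 (π / 2) := ⟨arccos_pos.2 ht₁, arccos_lt_pi_div_two.2 ht₀⟩
  have hcos₀ : cos θ₀ = t₀ := cos_arccos (by linarith) ht₁.le
  have hc : (0 : ℝ) ≤ 2 / π := by positivity
  have hderiv : ∀ t ∈ Icc 0 (π / 2), HasDerivAt (fun s ↦ s - π / 2 * (sin s / (1 + 2 / π * cos s)))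
      (4 / π ^ 2 * cos t * (cos t - t₀) / (1 + 2 / π * cos t) ^ 2) t := fun t ht ↦ by
    have hden := (one_add_mul_cos_pos hc ht).ne'
    rw [← one_sub_pi_div_two_mul_div_sq_eq hden]
    exact (hasDerivAt_id t).sub ((hasDerivAt_sin_div_one_add_mul_cos hden).const_mul (π / 2))
  refine sub_pos.1 <| pos_of_strictMonoOn_of_strictAntiOn
    (f := fun s ↦ s - π / 2 * (sin s / (1 + 2 / π * cos s))) (m := θ₀) ?_ ?_ (by simp) (by simp) hθ
  · refine strictMonoOn_Icc_of_hasDerivAt_pos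
      (fun t ht ↦ hderiv t ⟨ht.1, ht.2.trans hθ₀.2.le⟩) fun t ht ↦ ?_
    have hcos : t₀ < cos t :=
      hcos₀ ▸ cos_lt_cos_of_nonneg_of_le_pi_div_two ht.1.le hθ₀.2.le ht.2
    have := one_add_mul_cos_pos hc ⟨ht.1.le, ht.2.le.trans hθ₀.2.le⟩
    exact div_pos (mul_pos (mul_pos (by positivity) (by linarith)) (sub_pos.2 hcos)) (by positivity)
  · refine strictAntiOn_Icc_of_hasDerivAt_neg
      (fun t ht ↦ hderiv t ⟨hθ₀.1.le.trans ht.1, ht.2⟩) fun t ht ↦ ?_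
    have hcos : cos t < t₀ :=
      hcos₀ ▸ cos_lt_cos_of_nonneg_of_le_pi_div_two hθ₀.1.le ht.2.le ht.1
    have hcos' : 0 < cos t := cos_pos_of_mem_Ioo ⟨by linarith [pi_pos, hθ₀.1, ht.1], ht.2⟩
    exact div_neg_of_neg_of_pos (mul_neg_of_pos_of_neg (by positivity) (sub_neg.2 hcos))
      (by positivity)

lemma one_lt_sq_add_self_of_two_div_pi_le {a : ℝ} (ha : 2 / π ≤ a) : 1 < a ^ 2 + a := by
  have h : 40 / 63 < 2 / π := by
    rw [div_lt_div_iff₀ (by norm_num) pi_pos]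
    linarith [pi_lt_d2]
  nlinarith

theorem arctan_bounds_of_ge (a : ℝ) (ha : a ≥ 2 / Real.pi) (x : ℝ) (hx : 0 < x) :
    (Real.pi / 2) * x / (a + Real.sqrt (1 + x ^ 2)) < Real.arctan x ∧
      Real.arctan x < (1 + a) * x / (a + Real.sqrt (1 + x ^ 2)) := by
  have hθ : arctan x ∈ Ioo 0 (π / 2) := ⟨arctan_pos.2 hx, arctan_lt_pi_div_two x⟩
  have ha₀ : 0 ≤ a := le_trans (by positivity) ha
  constructor
  · calc π / 2 * x / (a + √(1 + x ^ 2)) ≤ π / 2 * (x / (2 / π + √(1 + x ^ 2))) := by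
          rw [mul_div_assoc]; gcongr
      _ = π / 2 * (sin (arctan x) / (1 + 2 / π * cos (arctan x))) := by
          rw [sin_arctan_div_one_add_mul_cos_arctan]
      _ < arctan x := pi_div_two_mul_sin_div_lt_self hθ
  · rw [mul_div_assoc, ← sin_arctan_div_one_add_mul_cos_arctan]
    exact self_lt_one_add_mul_sin_div ha₀ (one_lt_sq_add_self_of_two_div_pi_le ha)
      (Ioo_subset_Ioc_self hθ)
end

section
/- (Shafer's inequality) For every x > 0, one has arctan x > 3x/(1 + 2√(1 + x²)). -/
/-! With `s = √(1 + t²)`, the derivative of `arctan t - 3t / (1 + 2s)` simplifies to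
`(s - 1)² / (s² (1 + 2s)²)`, which is positive for `t ≠ 0`. The difference therefore increases
strictly on `[0, ∞)` from its value `0` at `t = 0`. -/

open Real Set

noncomputable section

def shaferGap (t : ℝ) : ℝ := arctan t - 3 * t / (1 + 2 * √(1 + t ^ 2))

lemma shaferGap_zero : shaferGap 0 = 0 := by
  simp [shaferGap]

lemma hasDerivAt_shaferGap (y : ℝ) :
    HasDerivAt shaferGap
      ((√(1 + y ^ 2) - 1) ^ 2 / ((1 + y ^ 2) * (1 + 2 * √(1 + y ^ 2)) ^ 2)) y := by
  have hpos : (0 : ℝ) < 1 + y ^ 2 := by positivity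
  have hsqrt : HasDerivAt (fun t : ℝ => √(1 + t ^ 2)) (2 * y / (2 * √(1 + y ^ 2))) y := by
    have hin : HasDerivAt (fun t : ℝ => 1 + t ^ 2) (2 * y) y := by
      simpa using (hasDerivAt_pow 2 y).const_add 1
    exact hin.sqrt hpos.ne'
  have hden : HasDerivAt (fun t : ℝ => 1 + 2 * √(1 + t ^ 2))
      (2 * (2 * y / (2 * √(1 + y ^ 2)))) y := (hsqrt.const_mul 2).const_add 1
  have hnum : HasDerivAt (fun t : ℝ => 3 * t) 3 y := by
    simpa using (hasDerivAt_id y).const_mul 3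
  have hden_ne : (1 : ℝ) + 2 * √(1 + y ^ 2) ≠ 0 := by positivity
  refine ((hasDerivAt_arctan y).sub (hnum.div hden hden_ne)).congr_deriv ?_
  set s := √(1 + y ^ 2)
  have hs : s ≠ 0 := (sqrt_pos.2 hpos).ne'
  have hy : y ^ 2 = s ^ 2 - 1 := by rw [sq_sqrt hpos.le]; ring
  field_simp
  rw [hy]
  ring

lemma shaferGap_deriv_pos {y : ℝ} (hy : y ≠ 0) : 0 < deriv shaferGap y := by
  rw [(hasDerivAt_shaferGap y).deriv]
  have hs : 1 < √(1 + y ^ 2) := by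
    rw [lt_sqrt zero_le_one]
    nlinarith [sq_pos_of_ne_zero hy]
  have : (0 : ℝ) < √(1 + y ^ 2) - 1 := by linarith
  positivity

lemma strictMonoOn_shaferGap : StrictMonoOn shaferGap (Ici 0) := by
  apply strictMonoOn_of_deriv_pos (convex_Ici 0)
  · exact fun y _ => (hasDerivAt_shaferGap y).continuousAt.continuousWithinAt
  · intro y hy
    rw [interior_Ici] at hy
    exact shaferGap_deriv_pos (ne_of_gt hy)

end

theorem shafer_inequality (x : ℝ) (hx : 0 < x) :
    Real.arctan x > 3 * x / (1 + 2 * Real.sqrt (1 + x ^ 2)) := by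
  have h := strictMonoOn_shaferGap self_mem_Ici hx.le hx
  rw [shaferGap_zero, shaferGap] at h
  exact sub_pos.1 h
end

section
/- For every x > 0, one has arctan x < 2x/(1 + √(1 + x²)). -/
/-!
With `y = x / (1 + √(1 + x²))`, the half-angle identity gives `arctan x = 2 arctan y`,
and `arctan y < y` for `y > 0` because `θ < tan θ` on `(0, π/2)`.
-/

open Real

namespace Real

theorem abs_div_one_add_sqrt_one_add_sq_lt_one (x : ℝ) : |x / (1 + √(1 + x ^ 2))| < 1 := by
  have hsq : |x| < √(1 + x ^ 2) := by
    rw [← sqrt_sq_eq_abs]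
    exact sqrt_lt_sqrt (sq_nonneg x) (by linarith)
  have hden : 0 < 1 + √(1 + x ^ 2) := by positivity
  rw [abs_div, abs_of_pos hden, div_lt_one hden]
  linarith

theorem arctan_eq_two_mul_arctan_div_one_add_sqrt (x : ℝ) :
    arctan x = 2 * arctan (x / (1 + √(1 + x ^ 2))) := by
  set s := √(1 + x ^ 2)
  have hs : s ^ 2 = 1 + x ^ 2 := sq_sqrt (by positivity)
  have hden : 0 < 1 + s := by positivity
  obtain ⟨hlo, hhi⟩ := abs_lt.1 (abs_div_one_add_sqrt_one_add_sq_lt_one x)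
  have hdenom : 1 - (x / (1 + s)) ^ 2 = 2 / (1 + s) := by
    field_simp
    linear_combination hs
  have hdouble : 2 * (x / (1 + s)) / (1 - (x / (1 + s)) ^ 2) = x := by
    rw [hdenom]
    field_simp
  rw [two_mul_arctan hlo hhi, hdouble]

theorem arctan_lt_self_s12 {y : ℝ} (hy : 0 < y) : arctan y < y := by
  simpa only [tan_arctan] using lt_tan (arctan_pos.2 hy) (arctan_lt_pi_div_two y)

end Real

theorem arctan_lt_two_x (x : ℝ) (hx : 0 < x) :
    Real.arctan x < 2 * x / (1 + Real.sqrt (1 + x ^ 2)) := by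
  rw [arctan_eq_two_mul_arctan_div_one_add_sqrt x, mul_div_assoc]
  exact mul_lt_mul_of_pos_left (arctan_lt_self_s12 (by positivity)) two_pos
end

section
/- The function a₁(x) = −(1 + √(9 + 8x²))/(4√(1 + x²)) is strictly increasing on (0, ∞), with a₁(x) → −1 as x → 0⁺ and a₁(x) → −√2/2 as x → ∞. -/
/-!
Put t = 1 / (1 + x²) ∈ (0, 1). Since 9 + 8x² = (1 + x²)(8 + t), we get
a₁(x) = -(√t + √(8 + t)) / 4, a continuous, strictly decreasing function of t ≥ 0.
As x runs increasingly through (0, ∞), t decreases from 1 (where the value is -1)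
to 0 (where it is -√8 / 4 = -√2 / 2).
-/

open Real Filter Set Topology

noncomputable def a1Profile (t : ℝ) : ℝ := -(√t + √(8 + t)) / 4

lemma a1_eq_a1Profile (x : ℝ) :
    -(1 + √(9 + 8 * x ^ 2)) / (4 * √(1 + x ^ 2)) = a1Profile (1 + x ^ 2)⁻¹ := by
  have hu : 0 < 1 + x ^ 2 := by positivity
  have hsplit : 9 + 8 * x ^ 2 = (1 + x ^ 2) * (8 + (1 + x ^ 2)⁻¹) := by
    field_simp; ring
  rw [a1Profile, hsplit, sqrt_mul hu.le, sqrt_inv]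
  field_simp

lemma a1Profile_strictAntiOn : StrictAntiOn a1Profile (Ici 0) := by
  intro s hs t ht hst
  have h₁ : √s < √t := sqrt_lt_sqrt hs hst
  have h₂ : √(8 + s) < √(8 + t) := sqrt_lt_sqrt (by linarith [mem_Ici.mp hs]) (by linarith)
  simp only [a1Profile]
  linarith

lemma continuous_a1Profile : Continuous a1Profile := by
  unfold a1Profile
  fun_prop

lemma a1Profile_one : a1Profile 1 = -1 := by
  have h9 : √9 = 3 := by
    rw [show (9 : ℝ) = 3 ^ 2 by norm_num, sqrt_sq (by norm_num)]
  norm_num [a1Profile, h9]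

lemma a1Profile_zero : a1Profile 0 = -(√2 / 2) := by
  have h8 : √8 = 2 * √2 := by
    rw [show (8 : ℝ) = 2 ^ 2 * 2 by norm_num, sqrt_mul (by positivity), sqrt_sq (by norm_num)]
  simp only [a1Profile, sqrt_zero, add_zero, zero_add, h8]
  ring

lemma strictAntiOn_inv_one_add_sq : StrictAntiOn (fun x : ℝ => (1 + x ^ 2)⁻¹) (Ioi 0) := by
  intro a ha b _ hab
  have ha' : 0 < a := ha
  exact inv_strictAnti₀ (by positivity) (by nlinarith)

lemma tendsto_inv_one_add_sq_atTop :
    Tendsto (fun x : ℝ => (1 + x ^ 2)⁻¹) atTop (𝓝 0) :=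
  (tendsto_atTop_add_const_left _ _ (tendsto_pow_atTop two_ne_zero)).inv_tendsto_atTop

lemma tendsto_inv_one_add_sq_nhdsGT_zero :
    Tendsto (fun x : ℝ => (1 + x ^ 2)⁻¹) (𝓝[>] 0) (𝓝 1) := by
  have hc : Continuous (fun x : ℝ => (1 + x ^ 2)⁻¹) :=
    Continuous.inv₀ (by fun_prop) fun x => by positivity
  simpa using (hc.tendsto 0).mono_left nhdsWithin_le_nhds

theorem a1_strictMono_and_limits :
    StrictMonoOn (fun x : ℝ => -(1 + Real.sqrt (9 + 8 * x ^ 2)) / (4 * Real.sqrt (1 + x ^ 2)))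
      (Set.Ioi (0 : ℝ)) ∧
    Filter.Tendsto (fun x : ℝ => -(1 + Real.sqrt (9 + 8 * x ^ 2)) / (4 * Real.sqrt (1 + x ^ 2)))
      (nhdsWithin 0 (Set.Ioi 0)) (nhds (-1)) ∧
    Filter.Tendsto (fun x : ℝ => -(1 + Real.sqrt (9 + 8 * x ^ 2)) / (4 * Real.sqrt (1 + x ^ 2)))
      Filter.atTop (nhds (-(Real.sqrt 2 / 2))) := by
  simp_rw [a1_eq_a1Profile]
  refine ⟨?_, ?_, ?_⟩
  · exact a1Profile_strictAntiOn.comp strictAntiOn_inv_one_add_sq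
      fun x _ => mem_Ici.mpr (by positivity)
  · rw [← a1Profile_one]
    exact continuous_a1Profile.continuousAt.tendsto.comp tendsto_inv_one_add_sq_nhdsGT_zero
  · rw [← a1Profile_zero]
    exact continuous_a1Profile.continuousAt.tendsto.comp tendsto_inv_one_add_sq_atTop
end

section
/- For every y with 0 < y < π/2, one has y > 3·sin y/(2 + cos y). -/
/-!
Put `f y = y (2 + cos y) - 3 sin y`, so that `f 0 = 0` and `f' y = 2 - 2 cos y - y sin y`.
Writing `y = 2x`, the double-angle formulas give `f' y = 4 sin x (sin x - x cos x)`, which is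
positive for `0 < y < π` because `x < tan x`. Hence `f` is strictly increasing on `[0, π]`;
for `y ≥ π` the inequality `3 sin y < y (2 + cos y)` is immediate from `y > 3` and `2 + cos y ≥ 1`.
-/

open Real Set

namespace Real

lemma mul_cos_lt_sin {x : ℝ} (hx0 : 0 < x) (hx1 : x < π / 2) : x * cos x < sin x := by
  have hcos : 0 < cos x := cos_pos_of_mem_Ioo ⟨by linarith, hx1⟩
  have htan := lt_tan hx0 hx1
  rwa [tan_eq_sin_div_cos, lt_div_iff₀ hcos] at htan

lemma mul_sin_lt_two_sub_two_mul_cos {y : ℝ} (hy0 : 0 < y) (hy1 : y < π) :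
    y * sin y < 2 - 2 * cos y := by
  obtain ⟨x, rfl⟩ : ∃ x, y = 2 * x := ⟨y / 2, by ring⟩
  have hsin : 0 < sin x := sin_pos_of_pos_of_lt_pi (by linarith) (by linarith)
  have hkey := mul_cos_lt_sin (x := x) (by linarith) (by linarith)
  rw [sin_two_mul, cos_two_mul, cos_sq']
  nlinarith [mul_lt_mul_of_pos_left hkey hsin]

lemma hasDerivAt_mul_two_add_cos_sub_three_mul_sin (y : ℝ) :
    HasDerivAt (fun y => y * (2 + cos y) - 3 * sin y) (2 - 2 * cos y - y * sin y) y := by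
  refine (((hasDerivAt_id' y).mul ((hasDerivAt_cos y).const_add 2)).sub
    ((hasDerivAt_sin y).const_mul 3)).congr_deriv ?_
  ring

lemma three_mul_sin_lt_mul_two_add_cos {y : ℝ} (hy : 0 < y) : 3 * sin y < y * (2 + cos y) := by
  rcases lt_or_ge π y with hπ | hπ
  · have : 0 ≤ y * (1 + cos y) := mul_nonneg hy.le (by linarith [neg_one_le_cos y])
    nlinarith [sin_le_one y, pi_gt_three]
  · have hmono : StrictMonoOn (fun y => y * (2 + cos y) - 3 * sin y) (Icc 0 π) := by
      refine strictMonoOn_of_hasDerivWithinAt_pos (convex_Icc 0 π) (by fun_prop)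
        (fun x _ => (hasDerivAt_mul_two_add_cos_sub_three_mul_sin x).hasDerivWithinAt)
        fun x hx => ?_
      rw [interior_Icc] at hx
      linarith [mul_sin_lt_two_sub_two_mul_cos hx.1 hx.2]
    have := hmono (left_mem_Icc.2 pi_pos.le) ⟨hy.le, hπ⟩ hy
    simp only [zero_mul, sin_zero, mul_zero, sub_zero] at this
    linarith

end Real

theorem trig_shafer_general (y : ℝ) (hy0 : 0 < y) :
    y > 3 * Real.sin y / (2 + Real.cos y) := by
  have hcos : 0 < 2 + cos y := by linarith [neg_one_le_cos y]
  rw [gt_iff_lt, div_lt_iff₀ hcos]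
  exact three_mul_sin_lt_mul_two_add_cos hy0

theorem trig_shafer (y : ℝ) (hy0 : 0 < y) (hy1 : y < Real.pi / 2) :
    y > 3 * Real.sin y / (2 + Real.cos y) :=
  trig_shafer_general y hy0
end
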